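/- Let G0 be the triangulation of the (non-convex) polyomino with cell set C = {(0,0),(0,1),(0,2),(1,0),(1,2),(2,1),(2,2)} obtained by adding to each cell (i,j) ∈ C the anti-diagonal edge {(i+1,j),(i,j+1)}, except for the cell (2,1), which instead receives the main diagonal edge {(2,1),(3,2)}. Then G0 is word-representable but not 3-colorable. -/

import Mathlib

/-- Two letters `x` and `y` alternate in the word `w` if the subsequence of `w`
consisting of all occurrences of `x` and `y` has no two consecutive equal letters. -/
def Alternates {V : Type*} [DecidableEq V] (w : List V) (x y : V) : Prop :=
  (w.filter fun z => decide (z = x ∨ z = y)).Chain' (· ≠ ·)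

/-- A word `w` represents the graph `G`: every vertex occurs in `w`, and two distinct
letters alternate in `w` iff they are adjacent in `G`. -/
def Represents {V : Type*} [DecidableEq V] (G : SimpleGraph V) (w : List V) : Prop :=
  (∀ v : V, v ∈ w) ∧ ∀ x y : V, x ≠ y → (Alternates w x y ↔ G.Adj x y)

/-- A graph is word-representable if some word represents it. -/
def WordRepresentable {V : Type*} [DecidableEq V] (G : SimpleGraph V) : Prop :=
  ∃ w : List V, Represents G w
/-- Two cells of `ℤ²` are edge-adjacent. -/
def CellAdj (a b : ℤ × ℤ) : Prop :=
  (a.1 - b.1).natAbs + (a.2 - b.2).natAbs = 1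

/-- A polyomino: a finite nonempty set of cells, connected under edge-adjacency. -/
def IsPolyomino (P : Finset (ℤ × ℤ)) : Prop :=
  P.Nonempty ∧ ∀ a ∈ P, ∀ b ∈ P,
    Relation.ReflTransGen (fun x y => x ∈ P ∧ y ∈ P ∧ CellAdj x y) a b

/-- The vertex set of a polyomino: all corners of its cells. -/
def polyVerts (P : Finset (ℤ × ℤ)) : Finset (ℤ × ℤ) :=
  P.biUnion fun c => {(c.1, c.2), (c.1 + 1, c.2), (c.1, c.2 + 1), (c.1 + 1, c.2 + 1)}

/-- The (ordered) pair `(u, v)` forms one of the four sides of the cell `c`. -/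
def IsSideOf (c u v : ℤ × ℤ) : Prop :=
  (u = (c.1, c.2) ∧ v = (c.1 + 1, c.2)) ∨
  (u = (c.1, c.2 + 1) ∧ v = (c.1 + 1, c.2 + 1)) ∨
  (u = (c.1, c.2) ∧ v = (c.1, c.2 + 1)) ∨
  (u = (c.1 + 1, c.2) ∧ v = (c.1 + 1, c.2 + 1))

/-- The triangulation of the polyomino `P` determined by the choice `d` of a diagonal
for each cell: all sides of cells of `P`, plus for each cell `c ∈ P` the main diagonal
`{c, c+(1,1)}` if `d c = 0` and the anti-diagonal `{c+(1,0), c+(0,1)}` if `d c = 1`. -/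
def PolyTri (P : Finset (ℤ × ℤ)) (d : ℤ × ℤ → Fin 2) :
    SimpleGraph {v : ℤ × ℤ // v ∈ polyVerts P} :=
  SimpleGraph.fromRel fun u v =>
    (∃ c ∈ P, IsSideOf c u.val v.val) ∨
    (∃ c ∈ P, (d c = 0 ∧ u.val = (c.1, c.2) ∧ v.val = (c.1 + 1, c.2 + 1)) ∨
              (d c = 1 ∧ u.val = (c.1 + 1, c.2) ∧ v.val = (c.1, c.2 + 1)))

/-- The cell set of the non-convex polyomino on 7 squares (a 3×3 square of cells with
the cells (1,1) and (2,0) removed). -/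
def P₀ : Finset (ℤ × ℤ) :=
  {(0, 0), (0, 1), (0, 2), (1, 0), (1, 2), (2, 1), (2, 2)}

/-- The diagonal choice: every cell receives the anti-diagonal, except the cell
`(2,1)`, which receives the main diagonal `{(2,1),(3,2)}`. -/
def d₀ : ℤ × ℤ → Fin 2 := fun c => if c = (2, 1) then 0 else 1

/-- The corresponding triangulation of the polyomino `P₀`. -/
def G₀ : SimpleGraph {v : ℤ × ℤ // v ∈ polyVerts P₀} := PolyTri P₀ d₀

/-! Two triangles `abc` and `bcd` sharing the edge `bc` force `a` and `d` to have the same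
colour in any 3-colouring. Around the hole of `P₀` this propagates the colour of the corner
`(1,0)` to `(0,2)` and to `(2,1)`, and from there to `(2,3)` and `(1,2)`; but `(0,2)` and
`(1,2)` are adjacent. Word-representability is witnessed by an explicit word, checked by
evaluation. -/

theorem SimpleGraph.Coloring.eq_of_triangles_share_edge {V : Type*} {G : SimpleGraph V}
    (C : G.Coloring (Fin 3)) {a b c d : V} (habc : G.Adj a b ∧ G.Adj a c ∧ G.Adj b c)
    (hbcd : G.Adj b d ∧ G.Adj c d) : C a = C d := by
  obtain ⟨hab, hac, hbc⟩ := habc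
  obtain ⟨hbd, hcd⟩ := hbcd
  have := C.valid hab; have := C.valid hac; have := C.valid hbc
  have := C.valid hbd; have := C.valid hcd
  omega

instance IsSideOf.instDecidable (c u v : ℤ × ℤ) : Decidable (IsSideOf c u v) := by
  unfold IsSideOf; infer_instance

instance PolyTri.instDecidableRelAdj (P : Finset (ℤ × ℤ)) (d : ℤ × ℤ → Fin 2) :
    DecidableRel (PolyTri P d).Adj :=
  fun u v => decidable_of_iff _ (SimpleGraph.fromRel_adj _ u v).symm

instance G₀.instDecidableRelAdj : DecidableRel G₀.Adj :=
  inferInstanceAs (DecidableRel (PolyTri P₀ d₀).Adj)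

instance Alternates.instDecidable {V : Type*} [DecidableEq V] (w : List V) (x y : V) :
    Decidable (Alternates w x y) :=
  inferInstanceAs (Decidable (List.IsChain _ _))

instance Represents.instDecidable {V : Type*} [DecidableEq V] [Fintype V]
    (G : SimpleGraph V) [DecidableRel G.Adj] (w : List V) : Decidable (Represents G w) :=
  inferInstanceAs (Decidable (_ ∧ _))

def corner (p : ℤ × ℤ) (hp : p ∈ polyVerts P₀ := by decide) : {v // v ∈ polyVerts P₀} :=
  ⟨p, hp⟩

theorem G₀_not_colorable : ¬ G₀.Colorable 3 := by
  rintro ⟨C⟩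
  have h₁ : C (corner (0, 2)) = C (corner (1, 0)) :=
    C.eq_of_triangles_share_edge (b := corner (0, 1)) (c := corner (1, 1)) (by decide) (by decide)
  have h₂ : C (corner (1, 0)) = C (corner (2, 1)) :=
    C.eq_of_triangles_share_edge (b := corner (1, 1)) (c := corner (2, 0)) (by decide) (by decide)
  have h₃ : C (corner (2, 1)) = C (corner (2, 3)) :=
    C.eq_of_triangles_share_edge (b := corner (2, 2)) (c := corner (3, 2)) (by decide) (by decide)
  have h₄ : C (corner (2, 3)) = C (corner (1, 2)) :=
    C.eq_of_triangles_share_edge (b := corner (1, 3)) (c := corner (2, 2)) (by decide) (by decide)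
  have hadj : G₀.Adj (corner (0, 2)) (corner (1, 2)) := by decide
  exact C.valid hadj (h₁.trans <| h₂.trans <| h₃.trans h₄)

def word₀ : List (ℤ × ℤ) :=
  [(3, 3), (2, 3), (1, 3), (0, 3), (3, 2), (3, 3), (0, 0), (2, 2), (3, 1), (1, 2), (2, 3), (2, 1),
    (3, 2), (3, 3), (1, 3), (2, 2), (0, 2), (0, 3), (1, 1), (1, 2), (2, 3), (0, 1), (3, 1), (0, 2),
    (2, 0), (1, 3), (2, 1), (1, 0), (1, 1), (3, 2), (3, 3), (2, 0), (2, 2), (3, 1), (2, 3), (2, 1),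
    (3, 2), (0, 3), (3, 1)]

theorem represents_G₀_word₀ : Represents G₀ (word₀.pmap Subtype.mk (by decide)) := by
  decide

/-- The triangulation `G₀` of the non-convex polyomino `P₀` is word-representable but
not 3-colorable. -/
theorem G₀_wordRepresentable_not_colorable :
    WordRepresentable G₀ ∧ ¬ G₀.Colorable 3 :=
  ⟨⟨_, represents_G₀_word₀⟩, G₀_not_colorable⟩
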